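/- For every real τ with 0 < τ ≤ 1/4 and every real Y > 0, one has lim_{T→+∞} ∫_0^Y F(T + iy, τ) · i dy = 0 (the integral over the vertical segment from T to T + iY tends to 0 as T → +∞). -/

import Mathlib

open Real Complex Filter MeasureTheory intervalIntegral

noncomputable def F (τ : ℝ) (z : ℂ) : ℂ :=
  2 * (π : ℂ) * (1 + (1 / 4 : ℂ) * z ^ (-(5 : ℂ) / 2)) *
    Complex.exp (-(π : ℂ) * z - (π : ℂ) / (4 * z)) *
    (1 - Complex.I * z) ^ ((1 / 2 : ℂ) * (1 / 2 + 2 * (π : ℂ) * Complex.I / (τ : ℂ) ^ 2))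

/-!
On the vertical segment from `T` to `T + iY`, the factor `exp(-πz)` has modulus `exp(-πT)`,
`exp(-π/(4z))` has modulus at most `1`, `1 + z^(-5/2)/4` stays bounded, and the power
`(1 - iz)^s` grows at most like `|z|^(Re s) exp(π |Im s|)`, i.e. linearly in `T`.
So `F` is `O(T exp(-πT))` uniformly on the segment, and so is the integral.
-/

lemma Complex.norm_cpow_le_rpow_mul_exp (w s : ℂ) :
    ‖w ^ s‖ ≤ ‖w‖ ^ s.re * Real.exp (π * |s.im|) := by
  refine (norm_cpow_le w s).trans ?_
  rw [div_eq_mul_inv, ← Real.exp_neg]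
  gcongr
  calc -(w.arg * s.im) ≤ |w.arg| * |s.im| := by rw [← abs_mul]; exact neg_le_abs _
    _ ≤ π * |s.im| := by gcongr; exact abs_arg_le_pi w

lemma Complex.re_ofReal_div_nonneg {x : ℝ} (hx : 0 ≤ x) {z : ℂ} (hz : 0 ≤ z.re) :
    0 ≤ ((x : ℂ) / z).re := by
  rw [div_eq_mul_inv, re_ofReal_mul, inv_re]
  have := normSq_nonneg z
  positivity

lemma norm_one_add_cpow_neg_five_halves_le {z : ℂ} (hz : 1 ≤ ‖z‖) :
    ‖1 + (1 / 4 : ℂ) * z ^ (-(5 : ℂ) / 2)‖ ≤ 5 / 4 := by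
  have hpow : ‖z ^ (-(5 : ℂ) / 2)‖ ≤ 1 := by
    refine (norm_cpow_le_rpow_mul_exp _ _).trans ?_
    have hre : (-(5 : ℂ) / 2).re = -(5 / 2) := by norm_num
    have him : (-(5 : ℂ) / 2).im = 0 := by norm_num
    rw [hre, him, abs_zero, mul_zero, Real.exp_zero, mul_one]
    exact Real.rpow_le_one_of_one_le_of_nonpos hz (by norm_num)
  calc ‖1 + (1 / 4 : ℂ) * z ^ (-(5 : ℂ) / 2)‖
      ≤ 1 + 1 / 4 * ‖z ^ (-(5 : ℂ) / 2)‖ := by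
        refine (norm_add_le _ _).trans ?_
        rw [norm_one, norm_mul]
        norm_num
    _ ≤ 5 / 4 := by linarith

lemma norm_exp_neg_pi_mul_sub_le {z : ℂ} (hz : 0 ≤ z.re) :
    ‖Complex.exp (-(π : ℂ) * z - (π : ℂ) / (4 * z))‖ ≤ Real.exp (-π * z.re) := by
  have h : 0 ≤ ((π : ℂ) / (4 * z)).re :=
    re_ofReal_div_nonneg pi_pos.le (by simpa using hz)
  rw [norm_exp, sub_re, neg_mul, neg_re, re_ofReal_mul, neg_mul]
  exact Real.exp_le_exp.2 (by linarith)

lemma exists_norm_F_le (τ : ℝ) :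
    ∃ C, 0 ≤ C ∧ ∀ z : ℂ, 1 ≤ z.re → ‖F τ z‖ ≤ C * ‖z‖ * Real.exp (-π * z.re) := by
  set s : ℂ := (1 / 2 : ℂ) * (1 / 2 + 2 * (π : ℂ) * Complex.I / (τ : ℂ) ^ 2) with hs
  have hs_re : s.re = 1 / 4 := by
    rw [hs, ← ofReal_pow, mul_re, add_re, div_ofReal_re]
    norm_num
  refine ⟨5 * π * Real.exp (π * |s.im|), by positivity, fun z hz => ?_⟩
  have hz_norm : 1 ≤ ‖z‖ := hz.trans ((le_abs_self _).trans (abs_re_le_norm z))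
  have hw : ‖(1 - Complex.I * z) ^ s‖ ≤ 2 * ‖z‖ * Real.exp (π * |s.im|) := by
    have hw_norm : 1 ≤ ‖1 - Complex.I * z‖ := by
      refine hz.trans (le_of_eq_of_le ?_ (abs_im_le_norm _))
      simp [abs_of_pos (zero_lt_one.trans_le hz)]
    refine (norm_cpow_le_rpow_mul_exp _ _).trans ?_
    gcongr
    calc ‖1 - Complex.I * z‖ ^ s.re ≤ ‖1 - Complex.I * z‖ := by
          rw [hs_re]
          exact Real.rpow_le_self_of_one_le hw_norm (by norm_num)
      _ ≤ 1 + ‖z‖ := by simpa using norm_sub_le (1 : ℂ) (Complex.I * z)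
      _ ≤ 2 * ‖z‖ := by linarith
  rw [F, ← hs, norm_mul, norm_mul, norm_mul, norm_mul, Complex.norm_ofNat, norm_real,
    norm_of_nonneg pi_pos.le]
  calc 2 * π * ‖1 + (1 / 4 : ℂ) * z ^ (-(5 : ℂ) / 2)‖ *
        ‖Complex.exp (-(π : ℂ) * z - (π : ℂ) / (4 * z))‖ * ‖(1 - Complex.I * z) ^ s‖
      ≤ 2 * π * (5 / 4) * Real.exp (-π * z.re) * (2 * ‖z‖ * Real.exp (π * |s.im|)) := by
        gcongr
        · exact norm_one_add_cpow_neg_five_halves_le hz_norm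
        · exact norm_exp_neg_pi_mul_sub_le (zero_le_one.trans hz)
    _ = 5 * π * Real.exp (π * |s.im|) * ‖z‖ * Real.exp (-π * z.re) := by ring

lemma tendsto_mul_exp_neg_pi_mul_atTop :
    Tendsto (fun T : ℝ => T * Real.exp (-π * T)) atTop (nhds 0) := by
  simpa only [Real.rpow_one] using tendsto_rpow_mul_exp_neg_mul_atTop_nhds_zero 1 π pi_pos

lemma norm_ofReal_add_I_mul_le {T y Y : ℝ} (hT : 1 ≤ T) (hy : |y| ≤ |Y|) :
    ‖(T : ℂ) + Complex.I * y‖ ≤ (1 + |Y|) * T := by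
  calc ‖(T : ℂ) + Complex.I * y‖ ≤ ‖(T : ℂ)‖ + ‖Complex.I * y‖ := norm_add_le _ _
    _ = |T| + |y| := by simp
    _ ≤ (1 + |Y|) * T := by
      rw [abs_of_pos (zero_lt_one.trans_le hT)]
      nlinarith [abs_nonneg Y]

theorem statement11 (τ : ℝ) (Y : ℝ) :
    Tendsto
      (fun T : ℝ => ∫ y in (0 : ℝ)..Y, F τ ((T : ℂ) + Complex.I * (y : ℂ)) * Complex.I)
      atTop (nhds 0) := by
  obtain ⟨C, hC, hF⟩ := exists_norm_F_le τ
  have hlim : Tendsto (fun T : ℝ => C * (1 + |Y|) * (T * Real.exp (-π * T)) * |Y - 0|)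
      atTop (nhds 0) := by
    simpa using (tendsto_mul_exp_neg_pi_mul_atTop.const_mul (C * (1 + |Y|))).mul_const |Y - 0|
  refine squeeze_zero_norm' ?_ hlim
  filter_upwards [eventually_ge_atTop 1] with T hT
  refine norm_integral_le_of_norm_le_const fun y hy => ?_
  have hyY : |y| ≤ |Y| := by simpa using Set.abs_sub_left_of_mem_uIcc (Set.uIoc_subset_uIcc hy)
  rw [norm_mul, norm_I, mul_one]
  calc ‖F τ ((T : ℂ) + Complex.I * y)‖
      ≤ C * ‖(T : ℂ) + Complex.I * y‖ * Real.exp (-π * T) := by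
        simpa using hF ((T : ℂ) + Complex.I * y) (by simpa using hT)
    _ ≤ C * ((1 + |Y|) * T) * Real.exp (-π * T) := by
      gcongr
      exact norm_ofReal_add_I_mul_le hT hyY
    _ = C * (1 + |Y|) * (T * Real.exp (-π * T)) := by ring
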